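/- arXiv:1210.6410 — 3 statements merged into one kernel-verified Lean document; each statement's English description precedes it below -/
import Mathlib

section
/- A commutative Noetherian ring R is reduced if and only if it satisfies both of the following: (R_0) for every prime ideal 𝔭 of R of height 0, the localization R_𝔭 is a regular local ring (equivalently, a field); and (S_1) every prime ideal of R associated to the zero ideal has height 0. -/
/-- A commutative Noetherian ring is reduced if and only if it satisfies Serre's
conditions (R₀) (the localization at every height-0 prime is regular, equivalently
a field) and (S₁) (every prime associated to zero has height 0). -/
theorem reduced_iff_R0_and_S1 {R : Type*} [CommRing R] [IsNoetherianRing R] :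
    IsReduced R ↔
      ((∀ (p : Ideal R) (hp : p.IsPrime),
          Order.height (⟨p, hp⟩ : PrimeSpectrum R) = 0 →
            IsField (Localization.AtPrime p)) ∧
        (∀ (p : Ideal R) (hp : IsAssociatedPrime p R),
          Order.height (⟨p, hp.1⟩ : PrimeSpectrum R) = 0)) := by
  constructor
  · intro hred
    constructor
    · intro p hp hh
      rw [Order.height_eq_zero, PrimeSpectrum.isMin_iff] at hh
      -- localization at minimal prime of reduced ring is a field
      rw [IsLocalRing.isField_iff_maximalIdeal_eq, eq_bot_iff]
      intro x hx
      have : IsNilpotent x := by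
        have h := IsLocalization.AtPrime.radical_map_of_mem_minimalPrimes
          (A := Localization.AtPrime p) p ⊥ hh
        rw [Ideal.map_bot, IsLocalization.AtPrime.map_eq_maximalIdeal] at h
        rw [← h] at hx
        obtain ⟨n, hn⟩ := hx
        exact ⟨n, Ideal.mem_bot.mp hn⟩
      simpa using this.eq_zero
    · intro p hp
      rw [Order.height_eq_zero, PrimeSpectrum.isMin_iff]
      obtain ⟨hprime, x, hx⟩ := isAssociatedPrime_iff.mp hp
      have hx0 : x ≠ 0 := by
        rintro rfl
        apply hprime.ne_top
        rw [hx]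
        rw [eq_top_iff]
        intro a _
        rw [Submodule.mem_colon_singleton]
        simp
      -- find a minimal prime not containing x
      have hnil : sInf (minimalPrimes R) = ⊥ := by
        have h := Ideal.sInf_minimalPrimes (I := (⊥ : Ideal R))
        have : (⊥ : Ideal R).radical = nilradical R := rfl
        rw [this, nilradical_eq_zero] at h
        exact h
      have : ∃ q ∈ minimalPrimes R, x ∉ q := by
        by_contra hcon
        push_neg at hcon
        have : x ∈ sInf (minimalPrimes R) := Ideal.mem_sInf.mpr fun {J} hJ => hcon J hJ
        rw [hnil] at this
        exact hx0 this
      obtain ⟨q, hq, hxq⟩ := this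
      have hpq : p ≤ q := by
        intro a ha
        have : a • x = 0 := by
          rw [hx] at ha
          exact (Submodule.mem_bot R).mp (Submodule.mem_colon_singleton.mp ha)
        have : a * x = 0 := this
        rcases hq.1.1.mul_mem_iff_mem_or_mem.mp (this ▸ q.zero_mem) with h | h
        · exact h
        · exact absurd h hxq
      have := hq.2 ⟨hprime, bot_le⟩ hpq
      exact le_antisymm hpq this ▸ hq
  · rintro ⟨h1, h2⟩
    refine ⟨fun x hx => ?_⟩
    by_contra hx0
    obtain ⟨P, hP, hPle⟩ := exists_le_isAssociatedPrime_of_isNoetherianRing R x hx0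
    haveI := hP.1
    letI : Field (Localization.AtPrime P) := (h1 P hP.1 (h2 P hP)).toField
    have : (algebraMap R (Localization.AtPrime P)) x = 0 := by
      have := hx.map (algebraMap R (Localization.AtPrime P))
      exact this.eq_zero
    rw [IsLocalization.map_eq_zero_iff P.primeCompl] at this
    obtain ⟨⟨s, hs⟩, hsx⟩ := this
    exact hs (hPle (by
      rw [Submodule.mem_colon_singleton, Submodule.mem_bot]
      simpa [smul_eq_mul] using hsx))
end

section
/- In ⋀³ℂ⁶, set w_1 = e_1∧e_2∧e_3, w_2 = w_1 + e_1∧e_4∧e_5, w_3 = w_2 + e_2∧e_4∧e_6, and w_4 = e_1∧e_2∧e_3 + e_4∧e_5∧e_6. Then for each j = 2, 3, 4, every polynomial function on ⋀³ℂ⁶ that vanishes on the GL_6(ℂ)-orbit of w_j also vanishes on the GL_6(ℂ)-orbit of w_{j-1}; that is, the Zariski closures of the four orbits form an increasing chain 𝒪̄_1 ⊆ 𝒪̄_2 ⊆ 𝒪̄_3 ⊆ 𝒪̄_4. -/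
noncomputable section

open ExteriorAlgebra

/-- The standard basis vectors of `ℂ⁶`. -/
def stdBasis6 (i : Fin 6) : Fin 6 → ℂ := Pi.single i 1

/-- The wedge `e_a ∧ e_b ∧ e_c`, an element of `⋀³ℂ⁶ ⊆ ⋀ℂ⁶`. -/
def wedge3 (a b c : Fin 6) : ExteriorAlgebra ℂ (Fin 6 → ℂ) :=
  ExteriorAlgebra.ιMulti ℂ 3 ![stdBasis6 a, stdBasis6 b, stdBasis6 c]

/-- The representatives `w₁, w₂, w₃, w₄` of the nonzero `GL₆(ℂ)`-orbits on `⋀³ℂ⁶`. -/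
def chainRep : Fin 4 → ExteriorAlgebra ℂ (Fin 6 → ℂ) :=
  ![wedge3 0 1 2,
    wedge3 0 1 2 + wedge3 0 3 4,
    wedge3 0 1 2 + wedge3 0 3 4 + wedge3 1 3 5,
    wedge3 0 1 2 + wedge3 3 4 5]

lemma tripleProd (x y z : Fin 6 → ℂ) :
    ExteriorAlgebra.ιMulti ℂ 3 ![x, y, z] = ι ℂ x * ι ℂ y * ι ℂ z := by
  simp [ExteriorAlgebra.ιMulti_apply, List.ofFn_succ, mul_assoc]

lemma wedge3_eq (a b c : Fin 6) :
    wedge3 a b c = ι ℂ (stdBasis6 a) * ι ℂ (stdBasis6 b) * ι ℂ (stdBasis6 c) :=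
  tripleProd _ _ _

lemma map_wedge3 (f : (Fin 6 → ℂ) →ₗ[ℂ] (Fin 6 → ℂ)) (a b c : Fin 6) :
    ExteriorAlgebra.map f (wedge3 a b c)
      = ι ℂ (f (stdBasis6 a)) * ι ℂ (f (stdBasis6 b)) * ι ℂ (f (stdBasis6 c)) := by
  rw [wedge3, ExteriorAlgebra.map_apply_ιMulti]
  have : (f ∘ ![stdBasis6 a, stdBasis6 b, stdBasis6 c])
      = ![f (stdBasis6 a), f (stdBasis6 b), f (stdBasis6 c)] := by
    funext i; fin_cases i <;> simp
  rw [this, tripleProd]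

lemma ι_swap (x y : Fin 6 → ℂ) : ι ℂ y * ι ℂ x = -(ι ℂ x * ι ℂ y) :=
  eq_neg_of_add_eq_zero_left (ExteriorAlgebra.ι_add_mul_swap y x)

lemma swapL1 (x y z : Fin 6 → ℂ) : ι ℂ x * ι ℂ z * ι ℂ y = -(ι ℂ x * ι ℂ y * ι ℂ z) := by
  rw [mul_assoc, ι_swap, mul_neg, mul_assoc]

lemma swapL2 (x y z : Fin 6 → ℂ) : ι ℂ y * ι ℂ x * ι ℂ z = -(ι ℂ x * ι ℂ y * ι ℂ z) := by
  rw [ι_swap, neg_mul]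

lemma swapL3 (x y z : Fin 6 → ℂ) : ι ℂ z * ι ℂ x * ι ℂ y = ι ℂ x * ι ℂ y * ι ℂ z := by
  rw [ι_swap x z, neg_mul, swapL1, neg_neg]

lemma swapL4 (x y z : Fin 6 → ℂ) : ι ℂ z * ι ℂ y * ι ℂ x = -(ι ℂ x * ι ℂ y * ι ℂ z) := by
  rw [ι_swap y z, neg_mul, (swapL3 y z x).symm]

def mkMap (v : Fin 6 → (Fin 6 → ℂ)) : (Fin 6 → ℂ) →ₗ[ℂ] (Fin 6 → ℂ) :=
  (Pi.basisFun ℂ (Fin 6)).constr ℂ v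

lemma mkMap_apply (v : Fin 6 → (Fin 6 → ℂ)) (i : Fin 6) :
    mkMap v (stdBasis6 i) = v i := by
  have h : stdBasis6 i = Pi.basisFun ℂ (Fin 6) i := by
    simp [stdBasis6, Pi.basisFun_apply]
  rw [h, mkMap, Module.Basis.constr_basis]

-- case j = 0
def vA (t : ℂ) : Fin 6 → (Fin 6 → ℂ) :=
  ![stdBasis6 0, stdBasis6 1, stdBasis6 2, t • stdBasis6 3, stdBasis6 4, stdBasis6 5]

lemma vA0 (t : ℂ) : vA t 0 = stdBasis6 0 := rfl
lemma vA1 (t : ℂ) : vA t 1 = stdBasis6 1 := rfl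
lemma vA2 (t : ℂ) : vA t 2 = stdBasis6 2 := rfl
lemma vA3 (t : ℂ) : vA t 3 = t • stdBasis6 3 := rfl
lemma vA4 (t : ℂ) : vA t 4 = stdBasis6 4 := rfl

lemma degA (t : ℂ) :
    ExteriorAlgebra.map (mkMap (vA t)) (wedge3 0 1 2 + wedge3 0 3 4)
      = wedge3 0 1 2 + t • wedge3 0 3 4 := by
  rw [map_add, map_wedge3, map_wedge3, wedge3_eq, wedge3_eq]
  simp [mkMap_apply, vA0, vA1, vA2, vA3, vA4, map_smul, smul_mul_assoc, mul_smul_comm]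

-- case j = 1
def vB (t : ℂ) : Fin 6 → (Fin 6 → ℂ) :=
  ![stdBasis6 0, stdBasis6 1, stdBasis6 2, stdBasis6 3, stdBasis6 4, t • stdBasis6 5]

lemma vB0 (t : ℂ) : vB t 0 = stdBasis6 0 := rfl
lemma vB1 (t : ℂ) : vB t 1 = stdBasis6 1 := rfl
lemma vB2 (t : ℂ) : vB t 2 = stdBasis6 2 := rfl
lemma vB3 (t : ℂ) : vB t 3 = stdBasis6 3 := rfl
lemma vB4 (t : ℂ) : vB t 4 = stdBasis6 4 := rfl
lemma vB5 (t : ℂ) : vB t 5 = t • stdBasis6 5 := rfl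

lemma degB (t : ℂ) :
    ExteriorAlgebra.map (mkMap (vB t)) (wedge3 0 1 2 + wedge3 0 3 4 + wedge3 1 3 5)
      = (wedge3 0 1 2 + wedge3 0 3 4) + t • wedge3 1 3 5 := by
  rw [map_add, map_add, map_wedge3, map_wedge3, map_wedge3, wedge3_eq, wedge3_eq, wedge3_eq]
  simp [mkMap_apply, vB0, vB1, vB2, vB3, vB4, vB5, map_smul, smul_mul_assoc, mul_smul_comm]

-- case j = 2
def vC (t : ℂ) : Fin 6 → (Fin 6 → ℂ) :=
  ![t⁻¹ • stdBasis6 0 + stdBasis6 5, stdBasis6 1 - t • stdBasis6 4,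
    stdBasis6 3 + t • stdBasis6 2, -(t⁻¹ • stdBasis6 0), stdBasis6 1, stdBasis6 3]

lemma vC0 (t : ℂ) : vC t 0 = t⁻¹ • stdBasis6 0 + stdBasis6 5 := rfl
lemma vC1 (t : ℂ) : vC t 1 = stdBasis6 1 - t • stdBasis6 4 := rfl
lemma vC2 (t : ℂ) : vC t 2 = stdBasis6 3 + t • stdBasis6 2 := rfl
lemma vC3 (t : ℂ) : vC t 3 = -(t⁻¹ • stdBasis6 0) := rfl
lemma vC4 (t : ℂ) : vC t 4 = stdBasis6 1 := rfl
lemma vC5 (t : ℂ) : vC t 5 = stdBasis6 3 := rfl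

lemma degC (t : ℂ) (ht : t ≠ 0) :
    ExteriorAlgebra.map (mkMap (vC t)) (wedge3 0 1 2 + wedge3 3 4 5)
      = (wedge3 0 1 2 + wedge3 0 3 4 + wedge3 1 3 5)
        + t • (wedge3 0 2 4 + wedge3 1 2 5 + wedge3 3 4 5)
        + (t * t) • wedge3 2 4 5 := by
  rw [map_add, map_wedge3, map_wedge3]
  simp only [wedge3_eq]
  rw [mkMap_apply, mkMap_apply, mkMap_apply, mkMap_apply, mkMap_apply, mkMap_apply,
    vC0, vC1, vC2, vC3, vC4, vC5]
  simp only [map_add, map_sub, map_neg, map_smul, add_mul, mul_add, sub_mul, mul_sub,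
    smul_mul_assoc, mul_smul_comm, neg_mul, mul_neg, smul_smul, neg_smul, smul_neg,
    smul_add, smul_sub]
  rw [swapL1 (stdBasis6 0) (stdBasis6 3) (stdBasis6 4),
    swapL1 (stdBasis6 0) (stdBasis6 2) (stdBasis6 4),
    swapL3 (stdBasis6 1) (stdBasis6 3) (stdBasis6 5),
    swapL3 (stdBasis6 1) (stdBasis6 2) (stdBasis6 5),
    swapL4 (stdBasis6 3) (stdBasis6 4) (stdBasis6 5),
    swapL4 (stdBasis6 2) (stdBasis6 4) (stdBasis6 5)]
  match_scalars <;> field_simp <;> ring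

def mkEquiv (v u : Fin 6 → (Fin 6 → ℂ))
    (h1 : ∀ i, mkMap v (u i) = stdBasis6 i)
    (h2 : ∀ i, mkMap u (v i) = stdBasis6 i) :
    (Fin 6 → ℂ) ≃ₗ[ℂ] (Fin 6 → ℂ) :=
  LinearEquiv.ofLinear (mkMap v) (mkMap u)
    ((Pi.basisFun ℂ (Fin 6)).ext fun i => by
      have h : (Pi.basisFun ℂ (Fin 6)) i = stdBasis6 i := by
        simp [stdBasis6, Pi.basisFun_apply]
      simp [h, mkMap_apply, h1 i])
    ((Pi.basisFun ℂ (Fin 6)).ext fun i => by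
      have h : (Pi.basisFun ℂ (Fin 6)) i = stdBasis6 i := by
        simp [stdBasis6, Pi.basisFun_apply]
      simp [h, mkMap_apply, h2 i])

def uA (t : ℂ) : Fin 6 → (Fin 6 → ℂ) :=
  ![stdBasis6 0, stdBasis6 1, stdBasis6 2, t⁻¹ • stdBasis6 3, stdBasis6 4, stdBasis6 5]

lemma hA1 (t : ℂ) (ht : t ≠ 0) : ∀ i, mkMap (vA t) (uA t i) = stdBasis6 i := by
  intro i
  fin_cases i <;>
    simp [show uA t 0 = stdBasis6 0 from rfl, show uA t 1 = stdBasis6 1 from rfl,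
      show uA t 2 = stdBasis6 2 from rfl, show uA t 3 = t⁻¹ • stdBasis6 3 from rfl,
      show uA t 4 = stdBasis6 4 from rfl, show uA t 5 = stdBasis6 5 from rfl, map_smul,
      mkMap_apply, vA0, vA1, vA2, vA3, vA4, show vA t 5 = stdBasis6 5 from rfl,
      smul_smul, inv_mul_cancel₀ ht]

lemma hA2 (t : ℂ) (ht : t ≠ 0) : ∀ i, mkMap (uA t) (vA t i) = stdBasis6 i := by
  intro i
  have u3 : uA t 3 = t⁻¹ • stdBasis6 3 := rfl
  fin_cases i <;>
    simp [vA0, vA1, vA2, vA3, vA4, show vA t 5 = stdBasis6 5 from rfl, map_smul,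
      mkMap_apply, u3, show uA t 0 = stdBasis6 0 from rfl, show uA t 1 = stdBasis6 1 from rfl,
      show uA t 2 = stdBasis6 2 from rfl, show uA t 4 = stdBasis6 4 from rfl,
      show uA t 5 = stdBasis6 5 from rfl, smul_smul, mul_inv_cancel₀ ht]

def uB (t : ℂ) : Fin 6 → (Fin 6 → ℂ) :=
  ![stdBasis6 0, stdBasis6 1, stdBasis6 2, stdBasis6 3, stdBasis6 4, t⁻¹ • stdBasis6 5]

lemma hB1 (t : ℂ) (ht : t ≠ 0) : ∀ i, mkMap (vB t) (uB t i) = stdBasis6 i := by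
  intro i
  fin_cases i <;>
    simp [show uB t 0 = stdBasis6 0 from rfl, show uB t 1 = stdBasis6 1 from rfl,
      show uB t 2 = stdBasis6 2 from rfl, show uB t 3 = stdBasis6 3 from rfl,
      show uB t 4 = stdBasis6 4 from rfl, show uB t 5 = t⁻¹ • stdBasis6 5 from rfl, map_smul,
      mkMap_apply, vB0, vB1, vB2, vB3, vB4, vB5, smul_smul, inv_mul_cancel₀ ht]

lemma hB2 (t : ℂ) (ht : t ≠ 0) : ∀ i, mkMap (uB t) (vB t i) = stdBasis6 i := by
  intro i
  fin_cases i <;>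
    simp [show uB t 0 = stdBasis6 0 from rfl, show uB t 1 = stdBasis6 1 from rfl,
      show uB t 2 = stdBasis6 2 from rfl, show uB t 3 = stdBasis6 3 from rfl,
      show uB t 4 = stdBasis6 4 from rfl, show uB t 5 = t⁻¹ • stdBasis6 5 from rfl, map_smul,
      mkMap_apply, vB0, vB1, vB2, vB3, vB4, vB5, smul_smul, mul_inv_cancel₀ ht]

def uC (t : ℂ) : Fin 6 → (Fin 6 → ℂ) :=
  ![-(t • stdBasis6 3), stdBasis6 4, t⁻¹ • stdBasis6 2 - t⁻¹ • stdBasis6 5,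
    stdBasis6 5, t⁻¹ • stdBasis6 4 - t⁻¹ • stdBasis6 1, stdBasis6 0 + stdBasis6 3]

lemma uC0 (t : ℂ) : uC t 0 = -(t • stdBasis6 3) := rfl
lemma uC1 (t : ℂ) : uC t 1 = stdBasis6 4 := rfl
lemma uC2 (t : ℂ) : uC t 2 = t⁻¹ • stdBasis6 2 - t⁻¹ • stdBasis6 5 := rfl
lemma uC3 (t : ℂ) : uC t 3 = stdBasis6 5 := rfl
lemma uC4 (t : ℂ) : uC t 4 = t⁻¹ • stdBasis6 4 - t⁻¹ • stdBasis6 1 := rfl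
lemma uC5 (t : ℂ) : uC t 5 = stdBasis6 0 + stdBasis6 3 := rfl

lemma hC1 (t : ℂ) (ht : t ≠ 0) : ∀ i, mkMap (vC t) (uC t i) = stdBasis6 i := by
  intro i
  fin_cases i <;>
    (simp only [Fin.zero_eta, Fin.mk_one, Fin.reduceFinMk, uC0, uC1, uC2, uC3, uC4, uC5,
      map_smul, map_add, map_sub, map_neg,
      mkMap_apply, vC0, vC1, vC2, vC3, vC4, vC5]
     try (match_scalars
          all_goals field_simp
          all_goals ring))

lemma hC2 (t : ℂ) (ht : t ≠ 0) : ∀ i, mkMap (uC t) (vC t i) = stdBasis6 i := by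
  intro i
  fin_cases i <;>
    (simp only [Fin.zero_eta, Fin.mk_one, Fin.reduceFinMk, uC0, uC1, uC2, uC3, uC4, uC5,
      map_smul, map_add, map_sub, map_neg,
      mkMap_apply, vC0, vC1, vC2, vC3, vC4, vC5]
     try (match_scalars
          all_goals field_simp
          all_goals ring))

lemma key {n : ℕ} (φ : Fin n → (ExteriorAlgebra ℂ (Fin 6 → ℂ) →ₗ[ℂ] ℂ))
    (p : MvPolynomial (Fin n) ℂ) (w w' v₁ v₂ : ExteriorAlgebra ℂ (Fin 6 → ℂ))
    (G : ∀ t : ℂ, t ≠ 0 → ((Fin 6 → ℂ) ≃ₗ[ℂ] (Fin 6 → ℂ)))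
    (hG : ∀ (t : ℂ) (ht : t ≠ 0),
      ExteriorAlgebra.map ((G t ht : (Fin 6 → ℂ) ≃ₗ[ℂ] (Fin 6 → ℂ)) :
        (Fin 6 → ℂ) →ₗ[ℂ] (Fin 6 → ℂ)) w = w' + t • v₁ + (t * t) • v₂)
    (hvanish : ∀ g : (Fin 6 → ℂ) ≃ₗ[ℂ] (Fin 6 → ℂ),
      MvPolynomial.eval (fun i => φ i (ExteriorAlgebra.map
        (g : (Fin 6 → ℂ) →ₗ[ℂ] (Fin 6 → ℂ)) w)) p = 0) :
    ∀ g : (Fin 6 → ℂ) ≃ₗ[ℂ] (Fin 6 → ℂ),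
      MvPolynomial.eval (fun i => φ i (ExteriorAlgebra.map
        (g : (Fin 6 → ℂ) →ₗ[ℂ] (Fin 6 → ℂ)) w')) p = 0 := by
  intro g
  set a : Fin n → ℂ := fun i => φ i (ExteriorAlgebra.map (g : (Fin 6 → ℂ) →ₗ[ℂ] _) w') with ha
  set b : Fin n → ℂ := fun i => φ i (ExteriorAlgebra.map (g : (Fin 6 → ℂ) →ₗ[ℂ] _) v₁) with hb
  set c : Fin n → ℂ := fun i => φ i (ExteriorAlgebra.map (g : (Fin 6 → ℂ) →ₗ[ℂ] _) v₂) with hc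
  set q : Polynomial ℂ := MvPolynomial.eval₂ Polynomial.C
    (fun i => Polynomial.C (a i) + Polynomial.X * Polynomial.C (b i)
      + Polynomial.X * Polynomial.X * Polynomial.C (c i)) p with hq
  have hqe : ∀ t : ℂ, Polynomial.eval t q
      = MvPolynomial.eval (fun i => a i + t * b i + t * t * c i) p := by
    intro t
    have h0 : Polynomial.eval t q = (Polynomial.evalRingHom t) q := rfl
    rw [h0, hq, MvPolynomial.eval₂_comp_left (Polynomial.evalRingHom t)]
    have hf : (Polynomial.evalRingHom t).comp Polynomial.C = RingHom.id ℂ := by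
      ext x; simp
    rw [hf, MvPolynomial.eval₂_id]
    have hg : (⇑(Polynomial.evalRingHom t) ∘ fun i =>
        Polynomial.C (a i) + Polynomial.X * Polynomial.C (b i)
          + Polynomial.X * Polynomial.X * Polynomial.C (c i))
        = fun i => a i + t * b i + t * t * c i := by
      funext i; simp; ring
    rw [hg]
  have hzero : ∀ t : ℂ, t ≠ 0 → Polynomial.eval t q = 0 := by
    intro t ht
    rw [hqe t]
    have := hvanish ((G t ht).trans g)
    rw [LinearEquiv.coe_trans] at this
    rw [← ExteriorAlgebra.map_comp_map, AlgHom.comp_apply, hG t ht] at this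
    simpa [ha, hb, hc, map_add, map_smul, mul_comm, mul_assoc, mul_left_comm] using this
  have hq0 : q = 0 := by
    apply Polynomial.eq_zero_of_infinite_isRoot
    apply Set.Infinite.mono (s := {x : ℂ | x ≠ 0})
    · intro x hx; exact hzero x hx
    · exact (Set.finite_singleton (0 : ℂ)).infinite_compl
  have := hqe 0
  rw [hq0] at this
  simp only [Polynomial.eval_zero] at this
  have h2 : (fun i => a i + 0 * b i + 0 * 0 * c i) = a := by funext i; ring
  rw [h2] at this
  exact this.symm


/-- The Zariski closures of the four nonzero `GL₆(ℂ)`-orbits on `⋀³ℂ⁶` form an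
increasing chain: for `j = 2, 3, 4`, every polynomial expression in linear
coordinates vanishing on the orbit of `w_j` also vanishes on the orbit of
`w_{j-1}`. -/
theorem trivector_orbit_closures_form_chain
    (j : Fin 3)
    (n : ℕ) (φ : Fin n → (ExteriorAlgebra ℂ (Fin 6 → ℂ) →ₗ[ℂ] ℂ))
    (p : MvPolynomial (Fin n) ℂ)
    (hvanish : ∀ g : (Fin 6 → ℂ) ≃ₗ[ℂ] (Fin 6 → ℂ),
      MvPolynomial.eval
        (fun i => φ i (ExteriorAlgebra.map (g : (Fin 6 → ℂ) →ₗ[ℂ] (Fin 6 → ℂ))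
          (chainRep j.succ))) p = 0) :
    ∀ g : (Fin 6 → ℂ) ≃ₗ[ℂ] (Fin 6 → ℂ),
      MvPolynomial.eval
        (fun i => φ i (ExteriorAlgebra.map (g : (Fin 6 → ℂ) →ₗ[ℂ] (Fin 6 → ℂ))
          (chainRep j.castSucc))) p = 0 := by
  fin_cases j
  · intro g
    have h := key φ p (wedge3 0 1 2 + wedge3 0 3 4) (wedge3 0 1 2) (wedge3 0 3 4) 0
      (fun t ht => mkEquiv (vA t) (uA t) (hA1 t ht) (hA2 t ht))
      (fun t ht => by
        have hc : ((mkEquiv (vA t) (uA t) (hA1 t ht) (hA2 t ht)) :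
            (Fin 6 → ℂ) →ₗ[ℂ] (Fin 6 → ℂ)) = mkMap (vA t) := rfl
        rw [hc, degA t, smul_zero, add_zero])
      (fun g' => by simpa [chainRep] using hvanish g') g
    simpa [chainRep] using h
  · intro g
    have h := key φ p (wedge3 0 1 2 + wedge3 0 3 4 + wedge3 1 3 5)
      (wedge3 0 1 2 + wedge3 0 3 4) (wedge3 1 3 5) 0
      (fun t ht => mkEquiv (vB t) (uB t) (hB1 t ht) (hB2 t ht))
      (fun t ht => by
        have hc : ((mkEquiv (vB t) (uB t) (hB1 t ht) (hB2 t ht)) :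
            (Fin 6 → ℂ) →ₗ[ℂ] (Fin 6 → ℂ)) = mkMap (vB t) := rfl
        rw [hc, degB t, smul_zero, add_zero])
      (fun g' => by simpa [chainRep] using hvanish g') g
    simpa [chainRep] using h
  · intro g
    have h := key φ p (wedge3 0 1 2 + wedge3 3 4 5)
      (wedge3 0 1 2 + wedge3 0 3 4 + wedge3 1 3 5)
      (wedge3 0 2 4 + wedge3 1 2 5 + wedge3 3 4 5) (wedge3 2 4 5)
      (fun t ht => mkEquiv (vC t) (uC t) (hC1 t ht) (hC2 t ht))
      (fun t ht => by
        have hc : ((mkEquiv (vC t) (uC t) (hC1 t ht) (hC2 t ht)) :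
            (Fin 6 → ℂ) →ₗ[ℂ] (Fin 6 → ℂ)) = mkMap (vC t) := rfl
        rw [hc, degC t ht])
      (fun g' => by
        simpa [chainRep, show (Fin.succ 2 : Fin 4) = 3 from rfl] using hvanish g') g
    simpa [chainRep, show (Fin.castSucc 2 : Fin 4) = 2 from rfl] using h
end
end

section
/- Let T = e_1⊗f_1⊗h_1 + e_2⊗f_1⊗h_1 + e_1⊗f_2⊗h_2 − e_2⊗f_2⊗h_2 + e_1⊗f_3⊗h_3 in ℂ² ⊗ ℂ³ ⊗ ℂ³. The orbit of T under the action of SL_2(ℂ) × SL_3(ℂ) × SL_3(ℂ) × ℂ^× (acting componentwise on the tensor factors and by scaling) is Zariski dense in ℂ² ⊗ ℂ³ ⊗ ℂ³: every polynomial function in the 18 coordinates x_{ijk} that vanishes on the orbit of T is identically zero. -/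
set_option maxHeartbeats 2000000
set_option synthInstance.maxHeartbeats 1000000


noncomputable section

open TensorProduct

/-- The space `ℂ² ⊗ ℂ³ ⊗ ℂ³`. -/
abbrev Tensor233 : Type :=
  TensorProduct ℂ (Fin 2 → ℂ) (TensorProduct ℂ (Fin 3 → ℂ) (Fin 3 → ℂ))

/-- The standard basis `e_i ⊗ f_j ⊗ h_k` of `ℂ² ⊗ ℂ³ ⊗ ℂ³`; the coordinates
`x_{ijk}` of a tensor are its coordinates in this basis. -/
def stdTensorBasis : Module.Basis (Fin 2 × Fin 3 × Fin 3) ℂ Tensor233 :=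
  (Pi.basisFun ℂ (Fin 2)).tensorProduct
    ((Pi.basisFun ℂ (Fin 3)).tensorProduct (Pi.basisFun ℂ (Fin 3)))

/-- The tensor
`T = e₁⊗f₁⊗h₁ + e₂⊗f₁⊗h₁ + e₁⊗f₂⊗h₂ − e₂⊗f₂⊗h₂ + e₁⊗f₃⊗h₃`. -/
def genericT : Tensor233 :=
  (Pi.single 0 1 : Fin 2 → ℂ) ⊗ₜ ((Pi.single 0 1 : Fin 3 → ℂ) ⊗ₜ (Pi.single 0 1 : Fin 3 → ℂ))
  + (Pi.single 1 1 : Fin 2 → ℂ) ⊗ₜ ((Pi.single 0 1 : Fin 3 → ℂ) ⊗ₜ (Pi.single 0 1 : Fin 3 → ℂ))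
  + (Pi.single 0 1 : Fin 2 → ℂ) ⊗ₜ ((Pi.single 1 1 : Fin 3 → ℂ) ⊗ₜ (Pi.single 1 1 : Fin 3 → ℂ))
  - (Pi.single 1 1 : Fin 2 → ℂ) ⊗ₜ ((Pi.single 1 1 : Fin 3 → ℂ) ⊗ₜ (Pi.single 1 1 : Fin 3 → ℂ))
  + (Pi.single 0 1 : Fin 2 → ℂ) ⊗ₜ ((Pi.single 2 1 : Fin 3 → ℂ) ⊗ₜ (Pi.single 2 1 : Fin 3 → ℂ))


lemma repr_acted (g : Matrix (Fin 2) (Fin 2) ℂ) (h k : Matrix (Fin 3) (Fin 3) ℂ) (t : ℂ)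
    (idx : Fin 2 × Fin 3 × Fin 3) :
    stdTensorBasis.repr (t • (TensorProduct.map g.mulVecLin
      (TensorProduct.map h.mulVecLin k.mulVecLin)) genericT) idx
    = t * ((g idx.1 0 + g idx.1 1) * (h idx.2.1 0 * k idx.2.2 0)
         + (g idx.1 0 - g idx.1 1) * (h idx.2.1 1 * k idx.2.2 1)
         + g idx.1 0 * (h idx.2.1 2 * k idx.2.2 2)) := by
  obtain ⟨i, j, l⟩ := idx
  have hT : (TensorProduct.map g.mulVecLin (TensorProduct.map h.mulVecLin k.mulVecLin)) genericT
      = (g.mulVec (Pi.single 0 1)) ⊗ₜ[ℂ] ((h.mulVec (Pi.single 0 1)) ⊗ₜ[ℂ] (k.mulVec (Pi.single 0 1)))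
      + (g.mulVec (Pi.single 1 1)) ⊗ₜ[ℂ] ((h.mulVec (Pi.single 0 1)) ⊗ₜ[ℂ] (k.mulVec (Pi.single 0 1)))
      + (g.mulVec (Pi.single 0 1)) ⊗ₜ[ℂ] ((h.mulVec (Pi.single 1 1)) ⊗ₜ[ℂ] (k.mulVec (Pi.single 1 1)))
      - (g.mulVec (Pi.single 1 1)) ⊗ₜ[ℂ] ((h.mulVec (Pi.single 1 1)) ⊗ₜ[ℂ] (k.mulVec (Pi.single 1 1)))
      + (g.mulVec (Pi.single 0 1)) ⊗ₜ[ℂ] ((h.mulVec (Pi.single 2 1)) ⊗ₜ[ℂ] (k.mulVec (Pi.single 2 1))) := by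
    simp only [genericT, map_add, map_sub, TensorProduct.map_tmul, Matrix.mulVecLin_apply]
  rw [map_smul, hT]
  simp only [map_add, map_sub, Finsupp.smul_apply,
    Finsupp.add_apply, Finsupp.sub_apply, stdTensorBasis,
    Module.Basis.tensorProduct_repr_tmul_apply, Pi.basisFun_repr, Matrix.mulVec_single_one,
    mul_one, smul_eq_mul, Matrix.col_apply]
  ring

/-- Line lemma: if an MvPolynomial vanishes along polynomially-parametrized points
for infinitely many parameter values, it vanishes for all parameter values. -/
lemma poly_line (p : MvPolynomial Idx ℂ) (g : Idx → Polynomial ℂ) (S : Set ℂ)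
    (hS : S.Infinite)
    (h : ∀ s ∈ S, MvPolynomial.eval (fun i => (g i).eval s) p = 0) :
    ∀ s : ℂ, MvPolynomial.eval (fun i => (g i).eval s) p = 0 := by
  set q : Polynomial ℂ := MvPolynomial.eval₂ Polynomial.C g p with hq
  have key : ∀ s : ℂ, q.eval s = MvPolynomial.eval (fun i => (g i).eval s) p := by
    intro s
    have := MvPolynomial.eval₂_comp_left (Polynomial.evalRingHom s) Polynomial.C g p
    simp only [Polynomial.coe_evalRingHom] at this
    rw [hq, this]
    have hid : (Polynomial.evalRingHom s).comp (Polynomial.C : ℂ →+* Polynomial ℂ)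
        = RingHom.id ℂ := by ext a; simp
    rw [hid]
    rfl
  have hq0 : q = 0 := by
    apply Polynomial.eq_zero_of_infinite_isRoot
    apply hS.mono
    intro s hs
    simp only [Set.mem_setOf_eq, Polynomial.IsRoot, key]
    exact h s hs
  intro s
  rw [← key, hq0]
  simp

lemma cert_infinite (e : Polynomial ℂ) (he : e ≠ 0) : {s : ℂ | e.eval s ≠ 0}.Infinite := by
  have hfin : {s : ℂ | e.IsRoot s}.Finite := Polynomial.finite_setOf_isRoot he
  have := hfin.infinite_compl
  convert this using 1
  ext s; simp [Polynomial.IsRoot.def]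
noncomputable section

def cub0 {R : Type*} [CommRing R] (x : Fin 2 × Fin 3 × Fin 3 → R) : R :=
  - x (1,0,0) * x (1,1,1) * x (1,2,2) + x (1,0,0) * x (1,1,2) * x (1,2,1) + x (1,0,1) * x (1,1,0) * x (1,2,2) - x (1,0,1) * x (1,1,2) * x (1,2,0) - x (1,0,2) * x (1,1,0) * x (1,2,1) + x (1,0,2) * x (1,1,1) * x (1,2,0)

def cub1 {R : Type*} [CommRing R] (x : Fin 2 × Fin 3 × Fin 3 → R) : R :=
  x (0,0,0) * x (1,1,1) * x (1,2,2) + x (1,0,0) * x (0,1,1) * x (1,2,2) + x (1,0,0) * x (1,1,1) * x (0,2,2) - x (0,0,0) * x (1,1,2) * x (1,2,1) - x (1,0,0) * x (0,1,2) * x (1,2,1) - x (1,0,0) * x (1,1,2) * x (0,2,1) - x (0,0,1) * x (1,1,0) * x (1,2,2) - x (1,0,1) * x (0,1,0) * x (1,2,2) - x (1,0,1) * x (1,1,0) * x (0,2,2) + x (0,0,1) * x (1,1,2) * x (1,2,0) + x (1,0,1) * x (0,1,2) * x (1,2,0) + x (1,0,1) * x (1,1,2) * x (0,2,0) + x (0,0,2)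 * x (1,1,0) * x (1,2,1) + x (1,0,2) * x (0,1,0) * x (1,2,1) + x (1,0,2) * x (1,1,0) * x (0,2,1) - x (0,0,2) * x (1,1,1) * x (1,2,0) - x (1,0,2) * x (0,1,1) * x (1,2,0) - x (1,0,2) * x (1,1,1) * x (0,2,0)

def cub2 {R : Type*} [CommRing R] (x : Fin 2 × Fin 3 × Fin 3 → R) : R :=
  - x (0,0,0) * x (0,1,1) * x (1,2,2) - x (0,0,0) * x (1,1,1) * x (0,2,2) - x (1,0,0) * x (0,1,1) * x (0,2,2) + x (0,0,0) * x (0,1,2) * x (1,2,1) + x (0,0,0) * x (1,1,2) * x (0,2,1) + x (1,0,0) * x (0,1,2) * x (0,2,1) + x (0,0,1) * x (0,1,0) * x (1,2,2) + x (0,0,1) * x (1,1,0) * x (0,2,2) + x (1,0,1) * x (0,1,0) * x (0,2,2) - x (0,0,1) * x (0,1,2) * x (1,2,0) - x (0,0,1) * x (1,1,2) * x (0,2,0) - x (1,0,1) * x (0,1,2) * x (0,2,0) - x (0,0,2) * x (0,1,0) * x (1,2,1) - x (0,0,2) * x (1,1,0) * x (0,2,1) - x (1,0,2) * x (0,1,0)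 * x (0,2,1) + x (0,0,2) * x (0,1,1) * x (1,2,0) + x (0,0,2) * x (1,1,1) * x (0,2,0) + x (1,0,2) * x (0,1,1) * x (0,2,0)

def cub3 {R : Type*} [CommRing R] (x : Fin 2 × Fin 3 × Fin 3 → R) : R :=
  x (0,0,0) * x (0,1,1) * x (0,2,2) - x (0,0,0) * x (0,1,2) * x (0,2,1) - x (0,0,1) * x (0,1,0) * x (0,2,2) + x (0,0,1) * x (0,1,2) * x (0,2,0) + x (0,0,2) * x (0,1,0) * x (0,2,1) - x (0,0,2) * x (0,1,1) * x (0,2,0)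

def det3 {R : Type*} [CommRing R] (b : Fin 3 → Fin 3 → R) : R :=
  b 0 0 * b 1 1 * b 2 2 - b 0 0 * b 1 2 * b 2 1 - b 0 1 * b 1 0 * b 2 2
  + b 0 1 * b 1 2 * b 2 0 + b 0 2 * b 1 0 * b 2 1 - b 0 2 * b 1 1 * b 2 0

def triadC {R : Type*} [CommRing R] (w z : Fin 2 → R) (al be : R) (b c : Fin 3 → Fin 3 → R) :
    Fin 2 × Fin 3 × Fin 3 → R := fun idx =>
  w idx.1 * b 0 idx.2.1 * c 0 idx.2.2 + z idx.1 * b 1 idx.2.1 * c 1 idx.2.2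
  + (al * w idx.1 + be * z idx.1) * b 2 idx.2.1 * c 2 idx.2.2

def certC {R : Type*} [CommRing R] (w z : Fin 2 → R) (al be : R) (b c : Fin 3 → Fin 3 → R) : R :=
  (w 0 * z 1 - w 1 * z 0) * al * be * det3 b * det3 c

def discC {R : Type*} [CommRing R] (x : Fin 2 × Fin 3 × Fin 3 → R) : R :=
  cub3 x * (18 * cub3 x * cub2 x * cub1 x * cub0 x - 4 * (cub2 x)^3 * cub0 x
    + (cub2 x)^2 * (cub1 x)^2 - 4 * cub3 x * (cub1 x)^3 - 27 * (cub3 x)^2 * (cub0 x)^2)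

lemma cubic_det_identity {R : Type*} [CommRing R] (x : Fin 2 × Fin 3 × Fin 3 → R) (lam : R) :
    Matrix.det (Matrix.of fun l k => lam * x (0,l,k) - x (1,l,k))
      = cub3 x * lam^3 + cub2 x * lam^2 + cub1 x * lam + cub0 x := by
  rw [Matrix.det_fin_three]
  simp only [Matrix.of_apply, cub0, cub1, cub2, cub3]
  ring

lemma triadC_map {R S : Type*} [CommRing R] [CommRing S] (f : R →+* S)
    (w z : Fin 2 → R) (al be : R) (b c : Fin 3 → Fin 3 → R) (idx : Fin 2 × Fin 3 × Fin 3) :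
    f (triadC w z al be b c idx)
      = triadC (f ∘ w) (f ∘ z) (f al) (f be) (fun l j => f (b l j)) (fun l j => f (c l j)) idx := by
  simp [triadC]

lemma certC_map {R S : Type*} [CommRing R] [CommRing S] (f : R →+* S)
    (w z : Fin 2 → R) (al be : R) (b c : Fin 3 → Fin 3 → R) :
    f (certC w z al be b c)
      = certC (f ∘ w) (f ∘ z) (f al) (f be) (fun l j => f (b l j)) (fun l j => f (c l j)) := by
  simp [certC, det3]

lemma discC_map {R S : Type*} [CommRing R] [CommRing S] (f : R →+* S)
    (x : Fin 2 × Fin 3 × Fin 3 → R) :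
    f (discC x) = discC (fun idx => f (x idx)) := by
  simp only [discC, cub0, cub1, cub2, cub3, map_add, map_sub, map_mul, map_neg, map_pow,
    map_ofNat]
open Polynomial

lemma cubic_factor (a b c d : ℂ) (ha : a ≠ 0) :
    ∃ r0 r1 r2 : ℂ, ∀ lam : ℂ,
      a*lam^3 + b*lam^2 + c*lam + d = a*(lam - r0)*(lam - r1)*(lam - r2) := by
  obtain ⟨r0, hr0⟩ : ∃ r0 : ℂ, a*r0^3 + b*r0^2 + c*r0 + d = 0 := by
    have hdeg : (C a * X^3 + C b * X^2 + C c * X + C d : ℂ[X]).degree = 3 :=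
      Polynomial.degree_cubic ha
    obtain ⟨z, hz⟩ := Complex.exists_root (by rw [hdeg]; norm_num)
    exact ⟨z, by simpa using hz⟩
  set A := a with hA
  set B := b + a*r0 with hB
  set Cc := c + b*r0 + a*r0^2 with hCc
  obtain ⟨r1, hr1⟩ : ∃ r1 : ℂ, A*r1^2 + B*r1 + Cc = 0 := by
    have hdeg : (C A * X^2 + C B * X + C Cc : ℂ[X]).degree = 2 :=
      Polynomial.degree_quadratic ha
    obtain ⟨z, hz⟩ := Complex.exists_root (f := C A * X^2 + C B * X + C Cc)
      (by rw [hdeg]; norm_num)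
    exact ⟨z, by simpa using hz⟩
  refine ⟨r0, r1, -(B + A*r1)/A, fun lam => ?_⟩
  have h1 : ∀ lam : ℂ, a*lam^3 + b*lam^2 + c*lam + d = (lam - r0)*(A*lam^2 + B*lam + Cc) := by
    intro lam
    simp only [hA, hB, hCc]
    linear_combination hr0
  have h2 : ∀ lam : ℂ, A*lam^2 + B*lam + Cc = (lam - r1)*(A*lam + (B + A*r1)) := by
    intro lam; linear_combination hr1
  rw [h1, h2]
  field_simp
  ring

lemma cubic_vieta (a b c d r0 r1 r2 : ℂ)
    (h : ∀ lam : ℂ, a*lam^3 + b*lam^2 + c*lam + d = a*(lam - r0)*(lam - r1)*(lam - r2)) :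
    b = -a*(r0+r1+r2) ∧ c = a*(r0*r1+r0*r2+r1*r2) ∧ d = -a*(r0*r1*r2) := by
  refine ⟨?_, ?_, ?_⟩
  · linear_combination (1/2 : ℂ) * (h 1) + (1/2 : ℂ) * (h (-1)) - h 0
  · linear_combination (1/2 : ℂ) * (h 1) - (1/2 : ℂ) * (h (-1))
  · linear_combination h 0

lemma cubic_disc (a b c d r0 r1 r2 : ℂ)
    (h : ∀ lam : ℂ, a*lam^3 + b*lam^2 + c*lam + d = a*(lam - r0)*(lam - r1)*(lam - r2)) :
    18*a*b*c*d - 4*b^3*d + b^2*c^2 - 4*a*c^3 - 27*a^2*d^2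
      = a^4 * ((r0-r1)*(r0-r2)*(r1-r2))^2 := by
  obtain ⟨hb, hc, hd⟩ := cubic_vieta a b c d r0 r1 r2 h
  subst hb hc hd
  ring

lemma det_M0_eq_cub3 (x : Fin 2 × Fin 3 × Fin 3 → ℂ) :
    (Matrix.of fun l k : Fin 3 => x (0,l,k)).det = cub3 x := by
  rw [Matrix.det_fin_three]; simp only [Matrix.of_apply, cub3]; try ring

lemma key3 (x : Fin 2 × Fin 3 × Fin 3 → ℂ) (hD : discC x ≠ 0) :
    ∃ (w z : Fin 2 → ℂ) (al be : ℂ) (b c : Fin 3 → Fin 3 → ℂ),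
      x = triadC w z al be b c := by
  have ha : cub3 x ≠ 0 := fun h => hD (by rw [discC, h]; ring)
  obtain ⟨r0, r1, r2, hfac⟩ := cubic_factor (cub3 x) (cub2 x) (cub1 x) (cub0 x) ha
  have hdisc := cubic_disc (cub3 x) (cub2 x) (cub1 x) (cub0 x) r0 r1 r2 hfac
  have hΔ : (cub3 x)^4 * ((r0-r1)*(r0-r2)*(r1-r2))^2 ≠ 0 := by
    rw [← hdisc]
    intro h
    apply hD
    rw [discC]
    linear_combination cub3 x * h
  have hdiff : (r0-r1) ≠ 0 ∧ (r0-r2) ≠ 0 ∧ (r1-r2) ≠ 0 := by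
    refine ⟨?_, ?_, ?_⟩ <;> (intro h; apply hΔ; rw [h]; ring)
  have h01 : r0 ≠ r1 := sub_ne_zero.mp hdiff.1
  have h02 : r0 ≠ r2 := sub_ne_zero.mp hdiff.2.1
  have h12 : r1 ≠ r2 := sub_ne_zero.mp hdiff.2.2
  obtain ⟨r, hr0, hr1, hr2⟩ : ∃ r : Fin 3 → ℂ, r 0 = r0 ∧ r 1 = r1 ∧ r 2 = r2 :=
    ⟨![r0, r1, r2], by simp, by simp, by simp⟩
  have hrinj : Function.Injective r := by
    intro i j hij
    fin_cases i <;> fin_cases j <;>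
      simp only [Fin.reduceFinMk, hr0, hr1, hr2] at hij <;>
      first
        | rfl
        | exact absurd hij h01
        | exact absurd hij.symm h01
        | exact absurd hij h02
        | exact absurd hij.symm h02
        | exact absurd hij h12
        | exact absurd hij.symm h12
  set M0 : Matrix (Fin 3) (Fin 3) ℂ := Matrix.of fun l k => x (0,l,k) with hM0
  set M1 : Matrix (Fin 3) (Fin 3) ℂ := Matrix.of fun l k => x (1,l,k) with hM1
  have hdet : M0.det = cub3 x := det_M0_eq_cub3 x
  have hw : ∀ i : Fin 3, ∃ w : Fin 3 → ℂ, w ≠ 0 ∧ M1.mulVec w = r i • M0.mulVec w := by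
    intro i
    have hmm : (Matrix.of fun l k => r i * x (0,l,k) - x (1,l,k)) = r i • M0 - M1 := by
      ext l k
      simp [hM0, hM1]
    have hdet0 : (r i • M0 - M1).det = 0 := by
      rw [← hmm, cubic_det_identity, hfac (r i)]
      fin_cases i <;> simp only [Fin.reduceFinMk, hr0, hr1, hr2] <;> ring
    obtain ⟨w, hw0, hwv⟩ := (Matrix.exists_mulVec_eq_zero_iff).2 hdet0
    refine ⟨w, hw0, ?_⟩
    rw [Matrix.sub_mulVec, sub_eq_zero] at hwv
    rw [← hwv, Matrix.smul_mulVec]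
  choose ws hws0 hwsv using hw
  have hdetM0 : IsUnit M0.det := by rw [hdet]; exact Ne.isUnit ha
  set N : Matrix (Fin 3) (Fin 3) ℂ := M0⁻¹ * M1 with hN
  have hNeig : ∀ i, N.mulVec (ws i) = r i • ws i := by
    intro i
    rw [hN, ← Matrix.mulVec_mulVec, hwsv i, Matrix.mulVec_smul, Matrix.mulVec_mulVec,
      Matrix.nonsing_inv_mul _ hdetM0, Matrix.one_mulVec]
  have hli : LinearIndependent ℂ ws := by
    apply Module.End.eigenvectors_linearIndependent' (Matrix.mulVecLin N) r hrinj
    intro i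
    constructor
    · rw [Module.End.mem_eigenspace_iff]
      simpa [Matrix.mulVecLin_apply] using hNeig i
    · exact hws0 i
  set W : Matrix (Fin 3) (Fin 3) ℂ := Matrix.of fun l i => ws i l with hW
  have hdetW : IsUnit W.det := by
    rw [isUnit_iff_ne_zero]
    intro h
    obtain ⟨v, hv0, hvW⟩ := (Matrix.exists_mulVec_eq_zero_iff).2 h
    have : ∀ i, v i = 0 := by
      apply Fintype.linearIndependent_iff.1 hli
      funext l
      have := congrFun hvW l
      simp only [Matrix.mulVec, dotProduct, hW, Matrix.of_apply, Pi.zero_apply] at this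
      simpa [Finset.sum_apply, mul_comm] using this
    exact hv0 (funext fun i => this i)
  set V : Matrix (Fin 3) (Fin 3) ℂ := W⁻¹ with hV
  have hWV : W * V = 1 := Matrix.mul_nonsing_inv _ hdetW
  have hM1W : ∀ j l, (M1 * W) j l = r l * ((M0 * W) j l) := by
    intro j l
    have h1 : (M1 * W) j l = (M1.mulVec (ws l)) j := by
      simp [Matrix.mul_apply, Matrix.mulVec, dotProduct, hW]
    have h2 : (M0 * W) j l = (M0.mulVec (ws l)) j := by
      simp [Matrix.mul_apply, Matrix.mulVec, dotProduct, hW]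
    rw [h1, hwsv l]
    simp [h2]
  have hM0r : ∀ j k, M0 j k = ∑ l : Fin 3, (M0 * W) j l * V l k := by
    intro j k
    have h3 : (M0 * W) * V = M0 := by rw [Matrix.mul_assoc, hWV, Matrix.mul_one]
    conv_lhs => rw [← h3]
    rw [Matrix.mul_apply]
  have hM1r : ∀ j k, M1 j k = ∑ l : Fin 3, (M1 * W) j l * V l k := by
    intro j k
    have h3 : (M1 * W) * V = M1 := by rw [Matrix.mul_assoc, hWV, Matrix.mul_one]
    conv_lhs => rw [← h3]
    rw [Matrix.mul_apply]
  refine ⟨![1, r0], ![1, r1], (r1 - r2)/(r1 - r0), (r2 - r0)/(r1 - r0),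
    (fun l j => (M0 * W) j l), (fun l k => V l k), ?_⟩
  have hr10 : r1 - r0 ≠ 0 := fun h => hdiff.1 (by linear_combination -h)
  funext idx
  obtain ⟨i, j, k⟩ := idx
  simp only [triadC]
  fin_cases i
  · simp only [Fin.reduceFinMk, Fin.zero_eta, Fin.mk_one, Matrix.cons_val_zero]
    have hx : x (0, j, k) = M0 j k := by simp [hM0]
    rw [hx, hM0r j k, Fin.sum_univ_three]
    field_simp
    try ring
  · simp only [Fin.reduceFinMk, Fin.zero_eta, Fin.mk_one, Matrix.cons_val_one, Matrix.head_cons, Matrix.cons_val_zero]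
    have hx : x (1, j, k) = M1 j k := by simp [hM1]
    rw [hx, hM1r j k, Fin.sum_univ_three, hM1W j 0, hM1W j 1, hM1W j 2, hr0, hr1, hr2]
    field_simp
    try ring

section
variable (p : MvPolynomial (Fin 2 × Fin 3 × Fin 3) ℂ)
  (hvanish : ∀ (g : Matrix.SpecialLinearGroup (Fin 2) ℂ)
      (h : Matrix.SpecialLinearGroup (Fin 3) ℂ) (k : Matrix.SpecialLinearGroup (Fin 3) ℂ)
      (t : ℂˣ),
      MvPolynomial.eval
        (fun idx => stdTensorBasis.repr
          ((t : ℂ) • (TensorProduct.map ((g : Matrix (Fin 2) (Fin 2) ℂ)).mulVecLin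
            (TensorProduct.map ((h : Matrix (Fin 3) (Fin 3) ℂ)).mulVecLin
              ((k : Matrix (Fin 3) (Fin 3) ℂ)).mulVecLin)) genericT) idx) p = 0)

include hvanish in
lemma base_case (w z : Fin 2 → ℂ) (al be : ℂ) (b c : Fin 3 → Fin 3 → ℂ)
    (hc : certC w z al be b c ≠ 0) :
    MvPolynomial.eval (triadC w z al be b c) p = 0 := by
  have hwz : w 0 * z 1 - w 1 * z 0 ≠ 0 := fun h => hc (by rw [certC, h]; ring)
  have hal : al ≠ 0 := fun h => hc (by rw [certC, h]; ring)
  have hbe : be ≠ 0 := fun h => hc (by rw [certC, h]; ring)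
  have hdb : det3 b ≠ 0 := fun h => hc (by rw [certC, h]; ring)
  have hdc : det3 c ≠ 0 := fun h => hc (by rw [certC, h]; ring)
  set g0 : Matrix (Fin 2) (Fin 2) ℂ :=
    Matrix.of fun i l => ![al * w i + be * z i, al * w i - be * z i] l with hg0
  set h0 : Matrix (Fin 3) (Fin 3) ℂ :=
    Matrix.of fun j l => ![b 0 j / (2*al), b 1 j / (2*be), b 2 j] l with hh0
  set k0 : Matrix (Fin 3) (Fin 3) ℂ := Matrix.of fun j l => c l j with hk0
  have hdetg0 : g0.det = -2 * al * be * (w 0 * z 1 - w 1 * z 0) := by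
    rw [Matrix.det_fin_two]; simp [hg0]; ring
  have hdetg0ne : g0.det ≠ 0 := by
    rw [hdetg0]
    exact mul_ne_zero (mul_ne_zero (mul_ne_zero (by norm_num) hal) hbe) hwz
  have hdeth0 : h0.det * ((2*al)*(2*be)) = det3 b := by
    rw [Matrix.det_fin_three]
    simp only [hh0, Matrix.of_apply, Matrix.cons_val_zero, Matrix.cons_val_one,
      Matrix.head_cons, Matrix.cons_val_two, Matrix.tail_cons, det3]
    have hu : (2*al) * (2*al)⁻¹ = 1 := mul_inv_cancel₀ (by simpa using hal)
    have hv : (2*be) * (2*be)⁻¹ = 1 := mul_inv_cancel₀ (by simpa using hbe)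
    simp only [div_eq_mul_inv]
    linear_combination ((b 0 0 * b 1 1 * b 2 2 - b 0 0 * b 1 2 * b 2 1 - b 0 1 * b 1 0 * b 2 2
          + b 0 1 * b 1 2 * b 2 0 + b 0 2 * b 1 0 * b 2 1 - b 0 2 * b 1 1 * b 2 0)
        * ((2*be) * (2*be)⁻¹)) * hu
      + (b 0 0 * b 1 1 * b 2 2 - b 0 0 * b 1 2 * b 2 1 - b 0 1 * b 1 0 * b 2 2
          + b 0 1 * b 1 2 * b 2 0 + b 0 2 * b 1 0 * b 2 1 - b 0 2 * b 1 1 * b 2 0) * hv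
  have hdeth0ne : h0.det ≠ 0 := by
    intro h
    apply hdb
    rw [← hdeth0, h, zero_mul]
  have hdetk0 : k0.det = det3 c := by
    rw [Matrix.det_fin_three]; simp [hk0, det3]; ring
  have hdetk0ne : k0.det ≠ 0 := by rw [hdetk0]; exact hdc
  obtain ⟨dg, hdg⟩ := IsAlgClosed.exists_pow_nat_eq g0.det (n := 2) (by norm_num)
  obtain ⟨dh, hdh⟩ := IsAlgClosed.exists_pow_nat_eq h0.det (n := 3) (by norm_num)
  obtain ⟨dk, hdk⟩ := IsAlgClosed.exists_pow_nat_eq k0.det (n := 3) (by norm_num)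
  have hdgne : dg ≠ 0 := fun h => hdetg0ne (by rw [← hdg, h]; ring)
  have hdhne : dh ≠ 0 := fun h => hdeth0ne (by rw [← hdh, h]; ring)
  have hdkne : dk ≠ 0 := fun h => hdetk0ne (by rw [← hdk, h]; ring)
  have hdetg : (dg⁻¹ • g0).det = 1 := by
    rw [Matrix.det_smul, Fintype.card_fin, ← hdg]
    field_simp
  have hdeth : (dh⁻¹ • h0).det = 1 := by
    rw [Matrix.det_smul, Fintype.card_fin, ← hdh]
    field_simp
  have hdetk : (dk⁻¹ • k0).det = 1 := by
    rw [Matrix.det_smul, Fintype.card_fin, ← hdk]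
    field_simp
  have htne : dg * dh * dk ≠ 0 := mul_ne_zero (mul_ne_zero hdgne hdhne) hdkne
  have hv := hvanish ⟨dg⁻¹ • g0, hdetg⟩ ⟨dh⁻¹ • h0, hdeth⟩ ⟨dk⁻¹ • k0, hdetk⟩
    (Units.mk0 _ htne)
  have hfun : (triadC w z al be b c)
      = (fun idx => stdTensorBasis.repr ((dg*dh*dk) • (TensorProduct.map (dg⁻¹ • g0).mulVecLin
          (TensorProduct.map (dh⁻¹ • h0).mulVecLin (dk⁻¹ • k0).mulVecLin)) genericT) idx) := by
    funext idx
    obtain ⟨i, j, kk⟩ := idx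
    rw [repr_acted]
    simp only [Matrix.smul_apply, hg0, hh0, hk0, Matrix.of_apply, Matrix.cons_val_zero,
      Matrix.cons_val_one, Matrix.head_cons, Matrix.cons_val_two, Matrix.tail_cons,
      smul_eq_mul, triadC, div_eq_mul_inv]
    have hG : dg * dg⁻¹ = 1 := mul_inv_cancel₀ hdgne
    have hH : dh * dh⁻¹ = 1 := mul_inv_cancel₀ hdhne
    have hK : dk * dk⁻¹ = 1 := mul_inv_cancel₀ hdkne
    have hA : (2*al) * (2*al)⁻¹ = 1 := mul_inv_cancel₀ (by simpa using hal)
    have hB : (2*be) * (2*be)⁻¹ = 1 := mul_inv_cancel₀ (by simpa using hbe)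
    linear_combination
      (-(w i * b 0 j * c 0 kk)) * ((dh*dh⁻¹)*(dk*dk⁻¹)*((2*al)*(2*al)⁻¹)*hG
        + (dk*dk⁻¹)*((2*al)*(2*al)⁻¹)*hH + ((2*al)*(2*al)⁻¹)*hK + hA)
      + (-(z i * b 1 j * c 1 kk)) * ((dh*dh⁻¹)*(dk*dk⁻¹)*((2*be)*(2*be)⁻¹)*hG
        + (dk*dk⁻¹)*((2*be)*(2*be)⁻¹)*hH + ((2*be)*(2*be)⁻¹)*hK + hB)
      + (-((al * w i + be * z i) * b 2 j * c 2 kk)) * ((dh*dh⁻¹)*(dk*dk⁻¹)*hG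
        + (dk*dk⁻¹)*hH + hK)
  rw [hfun]
  exact hv


include hvanish in
lemma triad_vanish (w z : Fin 2 → ℂ) (al be : ℂ) (b c : Fin 3 → Fin 3 → ℂ) :
    MvPolynomial.eval (triadC w z al be b c) p = 0 := by
  classical
  set w0 : Fin 2 → ℂ := ![1, 0] with hw0
  set z0 : Fin 2 → ℂ := ![0, 1] with hz0
  set b0 : Fin 3 → Fin 3 → ℂ := fun l j => if l = j then 1 else 0 with hb0
  -- polynomial parameters
  set wP : Fin 2 → Polynomial ℂ := fun i => Polynomial.C (w i)
    + Polynomial.X * Polynomial.C (w0 i - w i) with hwP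
  set zP : Fin 2 → Polynomial ℂ := fun i => Polynomial.C (z i)
    + Polynomial.X * Polynomial.C (z0 i - z i) with hzP
  set alP : Polynomial ℂ := Polynomial.C al + Polynomial.X * Polynomial.C (1 - al) with halP
  set beP : Polynomial ℂ := Polynomial.C be + Polynomial.X * Polynomial.C (1 - be) with hbeP
  set bP : Fin 3 → Fin 3 → Polynomial ℂ := fun l j => Polynomial.C (b l j)
    + Polynomial.X * Polynomial.C (b0 l j - b l j) with hbP
  set cP : Fin 3 → Fin 3 → Polynomial ℂ := fun l j => Polynomial.C (c l j)
    + Polynomial.X * Polynomial.C (b0 l j - c l j) with hcP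
  -- evaluated parameters
  set wE : ℂ → Fin 2 → ℂ := fun s i => w i + s * (w0 i - w i) with hwE
  set zE : ℂ → Fin 2 → ℂ := fun s i => z i + s * (z0 i - z i) with hzE
  set alE : ℂ → ℂ := fun s => al + s * (1 - al) with halE
  set beE : ℂ → ℂ := fun s => be + s * (1 - be) with hbeE
  set bE : ℂ → Fin 3 → Fin 3 → ℂ := fun s l j => b l j + s * (b0 l j - b l j) with hbE
  set cE : ℂ → Fin 3 → Fin 3 → ℂ := fun s l j => c l j + s * (b0 l j - c l j) with hcE
  have hcompw : ∀ s : ℂ, (Polynomial.evalRingHom s) ∘ wP = wE s := by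
    intro s; funext i; simp [hwP, hwE]
  have hcompz : ∀ s : ℂ, (Polynomial.evalRingHom s) ∘ zP = zE s := by
    intro s; funext i; simp [hzP, hzE]
  have hcompal : ∀ s : ℂ, (Polynomial.evalRingHom s) alP = alE s := by
    intro s; simp [halP, halE]
  have hcompbe : ∀ s : ℂ, (Polynomial.evalRingHom s) beP = beE s := by
    intro s; simp [hbeP, hbeE]
  have hcompb : ∀ s : ℂ, (fun l j => (Polynomial.evalRingHom s) (bP l j)) = bE s := by
    intro s; funext l j; simp [hbP, hbE]
  have hcompc : ∀ s : ℂ, (fun l j => (Polynomial.evalRingHom s) (cP l j)) = cE s := by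
    intro s; funext l j; simp [hcP, hcE]
  have hgval : ∀ (s : ℂ) idx,
      (triadC wP zP alP beP bP cP idx).eval s
        = triadC (wE s) (zE s) (alE s) (beE s) (bE s) (cE s) idx := by
    intro s idx
    have := triadC_map (Polynomial.evalRingHom s) wP zP alP beP bP cP idx
    rw [hcompw, hcompz, hcompal, hcompbe, hcompb, hcompc] at this
    exact this
  have heval : ∀ s : ℂ,
      (certC wP zP alP beP bP cP).eval s
        = certC (wE s) (zE s) (alE s) (beE s) (bE s) (cE s) := by
    intro s
    have := certC_map (Polynomial.evalRingHom s) wP zP alP beP bP cP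
    rw [hcompw, hcompz, hcompal, hcompbe, hcompb, hcompc] at this
    exact this
  have hone : certC (wE 1) (zE 1) (alE 1) (beE 1) (bE 1) (cE 1) = 1 := by
    simp only [certC, det3, hwE, hzE, halE, hbeE, hbE, hcE, hw0, hz0, hb0]
    norm_num [Fin.ext_iff]
  have hene : (certC wP zP alP beP bP cP) ≠ 0 := by
    intro h
    have := heval 1
    rw [h] at this
    simp [hone] at this
  have hS : {s : ℂ | (certC wP zP alP beP bP cP).eval s ≠ 0}.Infinite := cert_infinite _ hene
  have hall := poly_line p (fun idx => triadC wP zP alP beP bP cP idx)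
    {s : ℂ | (certC wP zP alP beP bP cP).eval s ≠ 0} hS ?_
  · have h0 := hall 0
    have harg : (fun idx => (triadC wP zP alP beP bP cP idx).eval 0)
        = triadC w z al be b c := by
      funext idx
      rw [hgval 0 idx]
      simp [triadC, hwE, hzE, halE, hbeE, hbE, hcE]
    rwa [harg] at h0
  · intro s hs
    have harg : (fun idx => (triadC wP zP alP beP bP cP idx).eval s)
        = triadC (wE s) (zE s) (alE s) (beE s) (bE s) (cE s) := by
      funext idx; rw [hgval s idx]
    rw [harg]
    apply base_case p hvanish
    rw [← heval s]
    exact hs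


include hvanish in
lemma disc_vanish (x : Fin 2 × Fin 3 × Fin 3 → ℂ) (hD : discC x ≠ 0) :
    MvPolynomial.eval x p = 0 := by
  obtain ⟨w, z, al, be, b, c, hx⟩ := key3 x hD
  rw [hx]
  exact triad_vanish p hvanish w z al be b c

def xT : Fin 2 × Fin 3 × Fin 3 → ℂ := fun idx =>
  (![![![1,0,0], ![0,1,0], ![0,0,1]], ![![1,0,0], ![0,-1,0], ![0,0,0]]] :
    Fin 2 → Fin 3 → Fin 3 → ℂ) idx.1 idx.2.1 idx.2.2

lemma discC_xT : discC xT = 4 := by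
  norm_num [discC, cub0, cub1, cub2, cub3, xT, Matrix.cons_val_two, Matrix.tail_cons]

include hvanish in
lemma all_vanish (x : Fin 2 × Fin 3 × Fin 3 → ℂ) : MvPolynomial.eval x p = 0 := by
  classical
  set lineP : Fin 2 × Fin 3 × Fin 3 → Polynomial ℂ := fun idx =>
    Polynomial.C (x idx) + Polynomial.X * Polynomial.C (xT idx - x idx) with hlineP
  set xE : ℂ → Fin 2 × Fin 3 × Fin 3 → ℂ := fun s idx => x idx + s * (xT idx - x idx) with hxE
  have hcomp : ∀ s : ℂ, (fun idx => (lineP idx).eval s) = xE s := by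
    intro s; funext idx; simp [hlineP, hxE]
  have heval : ∀ s : ℂ, (discC lineP).eval s = discC (xE s) := by
    intro s
    have := discC_map (Polynomial.evalRingHom s) lineP
    simpa [hcomp s] using this
  have hene : discC lineP ≠ 0 := by
    intro h
    have h1 := heval 1
    rw [h] at h1
    have hx1 : xE 1 = xT := by funext idx; simp [hxE]
    rw [hx1, discC_xT] at h1
    simp at h1
  have hall := poly_line p lineP {s : ℂ | (discC lineP).eval s ≠ 0} (cert_infinite _ hene) ?_
  · have h0 := hall 0
    have hx0 : (fun idx => (lineP idx).eval 0) = x := by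
      funext idx; simp [hlineP]
    rwa [hx0] at h0
  · intro s hs
    rw [show (fun idx => (lineP idx).eval s) = xE s from hcomp s]
    apply disc_vanish p hvanish
    rw [← heval s]
    exact hs

end

/-- The `SL₂(ℂ) × SL₃(ℂ) × SL₃(ℂ) × ℂ^×`-orbit of `T` is Zariski dense in
`ℂ² ⊗ ℂ³ ⊗ ℂ³`: every polynomial in the 18 coordinates `x_{ijk}` vanishing on the
orbit of `T` is identically zero. -/
theorem orbit_of_generic_tensor_is_dense
    (p : MvPolynomial (Fin 2 × Fin 3 × Fin 3) ℂ)
    (hvanish : ∀ (g : Matrix.SpecialLinearGroup (Fin 2) ℂ)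
      (h : Matrix.SpecialLinearGroup (Fin 3) ℂ) (k : Matrix.SpecialLinearGroup (Fin 3) ℂ)
      (t : ℂˣ),
      MvPolynomial.eval
        (fun idx => stdTensorBasis.repr
          ((t : ℂ) • (TensorProduct.map ((g : Matrix (Fin 2) (Fin 2) ℂ)).mulVecLin
            (TensorProduct.map ((h : Matrix (Fin 3) (Fin 3) ℂ)).mulVecLin
              ((k : Matrix (Fin 3) (Fin 3) ℂ)).mulVecLin)) genericT) idx) p = 0) :
    ∀ v : Tensor233, MvPolynomial.eval (fun idx => stdTensorBasis.repr v idx) p = 0 := by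
  intro v
  exact all_vanish p hvanish (fun idx => stdTensorBasis.repr v idx)
end
end
end
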